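/- arXiv:2106.05928 — 2 statements merged into one kernel-verified Lean document; each statement's English description precedes it below -/
import Mathlib

section
/- Let (G,σ) be a signed graph. If t = χ(G) − 1, then χ^t_sym(G,σ) = χ(G) + 1. -/
/-!
Common framework for symmetric-set colorings of signed graphs
(C. Cappello, E. Steffen, "Symmetric set coloring of signed graphs").

* A signed graph is a `SimpleGraph V` together with a signature
  `σ : Sym2 V → Bool` (`true` = positive edge, `false` = negative edge);
  only the values of `σ` on edges of `G` matter.
* The canonical symmetric set `S_{2k}^t` with `t` self-inverse elements and
  `k` pairs of non-self-inverse elements is `Sym t k := Fin t ⊕ Fin k × Bool`,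
  with negation `symNeg` fixing the `Fin t` part and swapping the Boolean.
-/

namespace SymSet

/-- The canonical symmetric set `S_{2k}^t`. -/
abbrev Sym (t k : ℕ) := Fin t ⊕ Fin k × Bool

/-- Negation on the symmetric set: self-inverse elements are fixed,
the two elements of each pair are exchanged. -/
def symNeg {t k : ℕ} : Sym t k → Sym t k
  | .inl i => .inl i
  | .inr (i, b) => .inr (i, !b)

/-- Action of a sign on a color: a positive sign acts trivially,
a negative sign acts by negation. -/
def signAct {t k : ℕ} (s : Bool) (x : Sym t k) : Sym t k :=
  if s then x else symNeg x

variable {V : Type*}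

/-- A proper `S_{2k}^t`-coloring of the signed graph `(G, σ)`:
`c v ≠ σ(e) · c w` for every edge `e = vw`. -/
def IsProperColoring (G : SimpleGraph V) (σ : Sym2 V → Bool) {t k : ℕ}
    (c : V → Sym t k) : Prop :=
  ∀ ⦃v w : V⦄, G.Adj v w → c v ≠ signAct (σ s(v, w)) (c w)

/-- `(G, σ)` admits a proper `S_{2k}^t`-coloring. -/
def SymColorable (G : SimpleGraph V) (σ : Sym2 V → Bool) (t k : ℕ) : Prop :=
  ∃ c : V → Sym t k, IsProperColoring G σ c

/-- The symset `t`-chromatic number `χ^t_sym(G, σ)`: the least `t + 2k`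
such that `(G, σ)` admits a proper `S_{2k}^t`-coloring. -/
noncomputable def symChromT (G : SimpleGraph V) (σ : Sym2 V → Bool) (t : ℕ) : ℕ :=
  sInf {n | ∃ k, n = t + 2 * k ∧ SymColorable G σ t k}

/-- The chromatic number of the underlying graph, as a natural number. -/
noncomputable def chrom (G : SimpleGraph V) : ℕ := G.chromaticNumber.toNat

/-- The symset chromatic number `χ_sym(G, σ)`: the minimum of
`χ^t_sym(G, σ)` over `0 ≤ t ≤ χ(G)`. -/
noncomputable def symChrom (G : SimpleGraph V) (σ : Sym2 V → Bool) : ℕ :=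
  sInf {n | ∃ t ≤ chrom G, n = symChromT G σ t}

/-- Switching a signature at the vertex set `X = {v | X v = true}`:
the sign of every edge with exactly one end in `X` is reversed. -/
def switch (X : V → Bool) (σ : Sym2 V → Bool) : Sym2 V → Bool :=
  fun e =>
    xor (Sym2.lift ⟨fun u v => xor (X u) (X v), fun u v => by simp [Bool.xor_comm]⟩ e) (σ e)

/-- Two signatures of `G` are equivalent if one is obtained from the other by a
switching (equality of signs is only required on the edges of `G`). -/
def Equivalent (G : SimpleGraph V) (σ σ' : Sym2 V → Bool) : Prop :=
  ∃ X : V → Bool, ∀ e ∈ G.edgeSet, σ' e = switch X σ e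

/-- The number of negative edges of a closed walk. -/
def negCount (σ : Sym2 V → Bool) {G : SimpleGraph V} {u : V} (w : G.Walk u u) : ℕ :=
  (w.edges.filter (fun e => !σ e)).length

/-- `(G, σ)` is balanced: every circuit has sign `+1`,
i.e. an even number of negative edges. -/
def Balanced (G : SimpleGraph V) (σ : Sym2 V → Bool) : Prop :=
  ∀ ⦃u : V⦄ (w : G.Walk u u), w.IsCycle → Even (negCount σ w)

/-- `(G, σ)` is antibalanced: every even circuit has sign `+1` and every odd
circuit has sign `-1`. -/
def Antibalanced (G : SimpleGraph V) (σ : Sym2 V → Bool) : Prop :=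
  ∀ ⦃u : V⦄ (w : G.Walk u u), w.IsCycle → (Even w.length ↔ Even (negCount σ w))

/-- Restriction of a signature to (the induced subgraph on) a vertex subset. -/
def restrict (σ : Sym2 V → Bool) (s : Set V) : Sym2 s → Bool :=
  fun e => σ (Sym2.map Subtype.val e)

/-- A circuit: a connected 2-regular graph. -/
def IsCircuit (G : SimpleGraph V) [Fintype V] [DecidableRel G.Adj] : Prop :=
  G.Connected ∧ G.IsRegularOfDegree 2

/-- The frustration index `l(G, σ)`: the least number of edges whose deletion
makes the signed graph balanced. -/
noncomputable def frustrationIndex (G : SimpleGraph V) (σ : Sym2 V → Bool) : ℕ :=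
  sInf {n | ∃ F : Finset (Sym2 V), F.card = n ∧ Balanced (G.deleteEdges ↑F) σ}

/-- A proper coloring of the signed expansion `±G` (each edge of `G` replaced by
a positive and a negative parallel edge): for each edge `vw` of `G`,
`c v ∉ {c w, -c w}`. -/
def IsProperExpColoring (G : SimpleGraph V) {t k : ℕ} (c : V → Sym t k) : Prop :=
  ∀ ⦃v w : V⦄, G.Adj v w → c v ≠ c w ∧ c v ≠ symNeg (c w)

/-- The symset `t`-chromatic number of the signed expansion `±G`. -/
noncomputable def expSymChromT (G : SimpleGraph V) (t : ℕ) : ℕ :=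
  sInf {n | ∃ k, n = t + 2 * k ∧ ∃ c : V → Sym t k, IsProperExpColoring G c}

end SymSet

/-!
Signs act trivially on self-inverse colors, so a proper `S_0^t`-coloring is just an ordinary
`t`-coloring; hence `χ^t_sym(G, σ) ≥ t + 2` once `t < χ(G)`. Conversely, an ordinary
`(t + k)`-coloring becomes a proper `S_{2k}^t`-coloring by sending the last `k` colors to one
element of each pair: no two distinct colors of this image are negatives of each other.
-/

namespace SymSet

section

variable {V : Type*} {t k : ℕ}

@[simp]
theorem signAct_inl (s : Bool) (i : Fin t) : signAct s (.inl i : Sym t k) = .inl i := by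
  cases s <;> rfl

theorem signAct_eq_self_of_zero (s : Bool) (x : Sym t 0) : signAct s x = x := by
  rcases x with i | ⟨i, _⟩
  · exact signAct_inl s i
  · exact i.elim0

def ofSum : Fin t ⊕ Fin k → Sym t k := Sum.map id fun i => (i, true)

theorem eq_of_ofSum_eq_signAct_ofSum {s : Bool} {x y : Fin t ⊕ Fin k}
    (h : ofSum x = signAct s (ofSum y)) : x = y := by
  rcases x with i | i <;> rcases y with j | j <;> cases s <;>
    simp_all [ofSum, signAct, symNeg]

theorem symColorable_of_colorable {G : SimpleGraph V} (σ : Sym2 V → Bool)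
    (h : G.Colorable (t + k)) : SymColorable G σ t k := by
  obtain ⟨C⟩ := h
  refine ⟨fun v => ofSum (finSumFinEquiv.symm (C v)), fun v w hvw heq => ?_⟩
  exact C.valid hvw (finSumFinEquiv.symm.injective (eq_of_ofSum_eq_signAct_ofSum heq))

theorem symColorable_zero_iff {G : SimpleGraph V} {σ : Sym2 V → Bool} :
    SymColorable G σ t 0 ↔ G.Colorable t := by
  refine ⟨fun ⟨c, hc⟩ => ?_, fun h => symColorable_of_colorable σ h⟩
  have C : G.Coloring (Sym t 0) :=
    SimpleGraph.Coloring.mk c fun hvw => by simpa [signAct_eq_self_of_zero] using hc hvw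
  simpa using C.colorable

theorem symChromT_eq_add_two {G : SimpleGraph V} {σ : Sym2 V → Bool}
    (h₁ : SymColorable G σ t 1) (h₀ : ¬ SymColorable G σ t 0) : symChromT G σ t = t + 2 := by
  refine le_antisymm (Nat.sInf_le ⟨1, rfl, h₁⟩) (le_csInf ⟨_, 1, rfl, h₁⟩ ?_)
  rintro _ ⟨_ | k, rfl, hk⟩
  · exact absurd hk h₀
  · omega

theorem colorable_iff_chrom_le [Fintype V] {G : SimpleGraph V} {n : ℕ} :
    G.Colorable n ↔ chrom G ≤ n := by
  have hchrom : G.chromaticNumber = chrom G := (ENat.natCast_toNat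
    (SimpleGraph.chromaticNumber_ne_top_iff_exists.2 ⟨_, G.colorable_of_fintype⟩)).symm
  rw [← SimpleGraph.chromaticNumber_le_iff_colorable, hchrom, Nat.cast_le]

end

/-- if `t = χ(G) - 1`, then `χ^t_sym(G, σ) = χ(G) + 1`. -/
theorem stmt5 {V : Type*} [Fintype V] (G : SimpleGraph V) (σ : Sym2 V → Bool)
    (t : ℕ) (ht : t + 1 = chrom G) :
    symChromT G σ t = chrom G + 1 := by
  have h₁ : G.Colorable (t + 1) := colorable_iff_chrom_le.2 ht.ge
  have h₀ : ¬ G.Colorable t := by rw [colorable_iff_chrom_le]; omega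
  rw [symChromT_eq_add_two (symColorable_of_colorable σ h₁) (symColorable_zero_iff.not.2 h₀)]
  omega

end SymSet
end

section
/- Let (G,σ) be a simple connected signed graph and t ∈ {0,…,χ(G)}. If G is not regular, then χ^t_sym(G,σ) ≤ Δ(G) + 1 when Δ(G) − t is odd, and χ^t_sym(G,σ) ≤ Δ(G) when Δ(G) − t is even. -/
/-!
Color the vertices greedily in order of decreasing distance from a vertex `u` of degree `< Δ`.
Every vertex `v ≠ u` has a neighbor strictly closer to `u`, which is colored after `v`; hence,
when a vertex is colored, fewer than `Δ` of its neighbors already carry a color, and each of them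
forbids exactly one color `σ(vw) · c(w)`. So any symmetric set with at least `Δ` elements
suffices, and `k` is chosen so that `t + 2k` is `Δ` or `Δ + 1` according to the parity of
`Δ - t`. The same argument with the all-positive signature and `k = 0` gives `χ(G) ≤ Δ`, hence
`t ≤ Δ`.
-/

open Finset

namespace SimpleGraph

variable {V : Type*} {G : SimpleGraph V}

lemma Connected.exists_adj_dist_lt (hconn : G.Connected) {u v : V} (hne : v ≠ u) :
    ∃ w, G.Adj v w ∧ G.dist w u < G.dist v u := by
  obtain ⟨p, hp⟩ := hconn.exists_walk_length_eq_dist v u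
  cases p with
  | nil => exact absurd rfl hne
  | cons hvw q => exact ⟨_, hvw, (dist_le q).trans_lt (by simp [← hp])⟩

lemma Connected.card_filter_dist_le_lt_maxDegree [Fintype V] [DecidableRel G.Adj]
    (hconn : G.Connected) {u : V} (hu : G.degree u < G.maxDegree) (v : V) :
    #{w ∈ G.neighborFinset v | G.dist v u ≤ G.dist w u} < G.maxDegree := by
  rcases eq_or_ne v u with rfl | hne
  · exact (card_filter_le _ _).trans_lt (by rwa [card_neighborFinset_eq_degree])
  · obtain ⟨w, hvw, hw⟩ := hconn.exists_adj_dist_lt hne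
    calc _ < #(G.neighborFinset v) :=
          card_lt_card (filter_ssubset.mpr ⟨w, (G.mem_neighborFinset v w).mpr hvw, by omega⟩)
      _ ≤ G.maxDegree := by
          rw [card_neighborFinset_eq_degree]
          exact G.degree_le_maxDegree v

lemma exists_degree_lt_maxDegree [Fintype V] [DecidableRel G.Adj]
    (hnreg : ¬ ∃ d, G.IsRegularOfDegree d) : ∃ u, G.degree u < G.maxDegree := by
  by_contra! hall
  exact hnreg ⟨G.maxDegree, fun v => (G.degree_le_maxDegree v).antisymm (hall v)⟩

end SimpleGraph

namespace SymSet

section SymmetricSet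

variable {t k : ℕ}

@[simp]
lemma signAct_signAct (s : Bool) (x : Sym t k) : signAct s (signAct s x) = x := by
  cases s <;> rcases x with i | ⟨i, b⟩ <;> simp [signAct, symNeg]

lemma ne_signAct_comm {s : Bool} {x y : Sym t k} : x ≠ signAct s y ↔ y ≠ signAct s x := by
  constructor <;> rintro h rfl <;> simp at h

lemma card_sym (t k : ℕ) : Fintype.card (Sym t k) = t + 2 * k := by
  simp [Fintype.card_sum, mul_comm]

end SymmetricSet

section SignedGraph

variable {V : Type*} {G : SimpleGraph V} {σ : Sym2 V → Bool} {t k : ℕ}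

lemma symChromT_le (h : SymColorable G σ t k) : symChromT G σ t ≤ t + 2 * k :=
  Nat.sInf_le ⟨k, rfl, h⟩

lemma SymColorable.colorable (h : SymColorable G (fun _ => true) t k) :
    G.Colorable (t + 2 * k) := by
  obtain ⟨c, hc⟩ := h
  rw [← card_sym]
  exact (SimpleGraph.Coloring.mk c fun hvw heq => hc hvw (by simpa [signAct] using heq)).colorable

lemma chrom_le_of_colorable {n : ℕ} (h : G.Colorable n) : chrom G ≤ n :=
  ENat.toNat_le_of_le_natCast h.chromaticNumber_le

def IsProperColoringOn (G : SimpleGraph V) (σ : Sym2 V → Bool) (c : V → Sym t k) (s : Finset V) :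
    Prop :=
  ∀ v ∈ s, ∀ w ∈ s, G.Adj v w → c v ≠ signAct (σ s(v, w)) (c w)

lemma IsProperColoringOn.exists_update_insert [Fintype V] [DecidableEq V] [DecidableRel G.Adj]
    {c : V → Sym t k} {s : Finset V} (hc : IsProperColoringOn G σ c s) {a : V} (ha : a ∉ s)
    (hcard : #{w ∈ G.neighborFinset a | w ∈ s} < t + 2 * k) :
    ∃ x, IsProperColoringOn G σ (Function.update c a x) (insert a s) := by
  have hforbidden :
      #({w ∈ G.neighborFinset a | w ∈ s}.image fun w => signAct (σ s(a, w)) (c w)) <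
        #(univ : Finset (Sym t k)) := by
    rw [card_univ, card_sym]
    exact card_image_le.trans_lt hcard
  obtain ⟨x, -, hx⟩ := exists_mem_notMem_of_card_lt_card hforbidden
  have hxa : ∀ w ∈ s, G.Adj a w → x ≠ signAct (σ s(a, w)) (c w) := fun w hw haw heq =>
    hx (mem_image.mpr ⟨w, mem_filter.mpr ⟨(G.mem_neighborFinset a w).mpr haw, hw⟩, heq.symm⟩)
  have hne : ∀ w ∈ s, w ≠ a := fun w hw hwa => ha (hwa ▸ hw)
  refine ⟨x, ?_⟩
  simp only [IsProperColoringOn, mem_insert]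
  rintro v (rfl | hv) w (rfl | hw) hvw
  · exact absurd hvw G.irrefl
  · simpa [hne w hw] using hxa w hw hvw
  · simpa [hne v hv, Sym2.eq_swap, ne_signAct_comm] using hxa v hv hvw.symm
  · simpa [hne v hv, hne w hw] using hc v hv w hw hvw

lemma symColorable_of_card_filter_le_lt [Fintype V] [DecidableRel G.Adj] {α : Type*}
    [LinearOrder α] (f : V → α) (h : ∀ v, #{w ∈ G.neighborFinset v | f v ≤ f w} < t + 2 * k) :
    SymColorable G σ t k := by
  classical
  have : Nonempty (V → Sym t k) := by
    cases isEmpty_or_nonempty V with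
    | inl _ => infer_instance
    | inr hV =>
      have : Nonempty (Sym t k) := by
        rw [← Fintype.card_pos_iff, card_sym]
        exact (h hV.some).trans_le' (Nat.zero_le _)
      infer_instance
  suffices ∀ s, ∃ c : V → Sym t k, IsProperColoringOn G σ c s by
    obtain ⟨c, hc⟩ := this univ
    exact ⟨c, fun v w hvw => hc v (mem_univ v) w (mem_univ w) hvw⟩
  intro s
  induction s using Finset.induction_on_min_value f with
  | empty => exact ⟨Classical.arbitrary _, by simp [IsProperColoringOn]⟩
  | insert a s ha hmin ih =>
    obtain ⟨c, hc⟩ := ih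
    have hcard : #{w ∈ G.neighborFinset a | w ∈ s} < t + 2 * k :=
      (card_le_card (monotone_filter_right _ fun w _ hw => hmin w hw)).trans_lt (h a)
    obtain ⟨x, hx⟩ := hc.exists_update_insert ha hcard
    exact ⟨_, hx⟩

lemma symColorable_of_maxDegree_le [Fintype V] [DecidableRel G.Adj] (hconn : G.Connected)
    (hnreg : ¬ ∃ d, G.IsRegularOfDegree d) (h : G.maxDegree ≤ t + 2 * k) :
    SymColorable G σ t k := by
  obtain ⟨u, hu⟩ := G.exists_degree_lt_maxDegree hnreg
  exact symColorable_of_card_filter_le_lt (G.dist · u)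
    fun v => (hconn.card_filter_dist_le_lt_maxDegree hu v).trans_le h

lemma chrom_le_maxDegree [Fintype V] [DecidableRel G.Adj] (hconn : G.Connected)
    (hnreg : ¬ ∃ d, G.IsRegularOfDegree d) : chrom G ≤ G.maxDegree :=
  chrom_le_of_colorable
    (symColorable_of_maxDegree_le (σ := fun _ => true) (k := 0) hconn hnreg le_rfl).colorable

end SignedGraph

/-- if `(G, σ)` is a simple connected signed graph, `G` is not
regular and `t ∈ {0, …, χ(G)}`, then `χ^t_sym(G,σ) ≤ Δ(G) + 1` when
`Δ(G) - t` is odd, and `χ^t_sym(G,σ) ≤ Δ(G)` when `Δ(G) - t` is even. -/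
theorem stmt9 {V : Type*} [Fintype V] (G : SimpleGraph V) [DecidableRel G.Adj]
    (σ : Sym2 V → Bool) (hconn : G.Connected)
    (hnreg : ¬ ∃ d, G.IsRegularOfDegree d) (t : ℕ) (ht : t ≤ chrom G) :
    (Odd ((G.maxDegree : ℤ) - t) → symChromT G σ t ≤ G.maxDegree + 1) ∧
    (Even ((G.maxDegree : ℤ) - t) → symChromT G σ t ≤ G.maxDegree) := by
  have htΔ : t ≤ G.maxDegree := ht.trans (chrom_le_maxDegree hconn hnreg)
  constructor
  · rintro ⟨m, hm⟩
    have hk : t + 2 * ((G.maxDegree + 1 - t) / 2) = G.maxDegree + 1 := by omega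
    exact hk ▸ symChromT_le (symColorable_of_maxDegree_le hconn hnreg (by omega))
  · rintro ⟨m, hm⟩
    have hk : t + 2 * ((G.maxDegree - t) / 2) = G.maxDegree := by omega
    exact hk ▸ symChromT_le (symColorable_of_maxDegree_le hconn hnreg hk.ge)

end SymSet
end
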